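/- arXiv:2003.06820 — 3 statements merged into one kernel-verified Lean document; each statement's English description precedes it below -/
import Mathlib

section
/- Let n ≥ 1 and let f : ℝ^n → ℝ^n be a continuous intra order-preserving function. Then f is order-invariant if and only if there exists a continuous function w : ℝ^n → ℝ^n such that: (i) for every x ∈ ℝ^n, every permutation σ sorting x, and every i ∈ {1,…,n}, f(x)_{σ(i)} = Σ_{j=i}^{n} w_j(y), where y is the sorted version of x; (ii) for every x ∈ ℝ^n and every i < n, w_i(y) = 0 if y_i = y_{i+1} and w_i(y) > 0 if y_i > y_{i+1} (w_n(y) is unconstrained). -/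
/-- `f` is intra order-preserving: `x` and `f x` share the same ranking. -/
def IntraOrderPreserving (n : ℕ) (f : (Fin n → ℝ) → (Fin n → ℝ)) : Prop :=
  ∀ (x : Fin n → ℝ) (i j : Fin n), x i > x j ↔ f x i > f x j

/-- `f` is order-invariant: it commutes with every permutation of the coordinates. -/
def OrderInvariant (n : ℕ) (f : (Fin n → ℝ) → (Fin n → ℝ)) : Prop :=
  ∀ (σ : Equiv.Perm (Fin n)) (x : Fin n → ℝ), f (x ∘ σ) = f x ∘ σ

/-- `σ` is a permutation sorting `x` in nonincreasing order. -/
def SortsPerm (n : ℕ) (σ : Equiv.Perm (Fin n)) (x : Fin n → ℝ) : Prop :=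
  Antitone (x ∘ σ)

/-- The sorted (nonincreasing) version of `x`. -/
noncomputable def sortedDesc (n : ℕ) (x : Fin n → ℝ) : Fin n → ℝ :=
  fun i => x (Tuple.sort (fun j => -x j) i)

/-!
An order-invariant `f` satisfies `f x ∘ σ = f y` whenever `σ` sorts `x` and `y` is the sorted
version of `x`, so `f` is determined by its values on sorted vectors. There `f y` is again
sorted with exactly the ties of `y` (intra order preservation), so its consecutive gaps
`w y i = f y i - f y (i + 1)` (and `w y (n - 1) = f y (n - 1)`) vanish on ties, are positive on
strict descents, and sum up to `f y`. Conversely, formula (i) makes `f x ∘ σ` a function of the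
sorted version of `x` alone, and comparing two sortings of `x` and of `x ∘ π` gives invariance.
-/

open Finset

section

variable {n : ℕ}

section NextDiff

variable {M : Type*} [AddCommGroup M]

/-- Consecutive differences, reading `v` as `0` past the last index. -/
def nextDiff (v : Fin n → M) (i : Fin n) : M :=
  v i - if h : (i : ℕ) + 1 < n then v ⟨i + 1, h⟩ else 0

lemma nextDiff_of_succ_lt (v : Fin n → M) {i : ℕ} (hi : i + 1 < n) :
    nextDiff v ⟨i, Nat.lt_of_succ_lt hi⟩ = v ⟨i, Nat.lt_of_succ_lt hi⟩ - v ⟨i + 1, hi⟩ := by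
  simp [nextDiff, hi]

lemma sum_Ici_nextDiff (v : Fin n → M) (i : Fin n) : ∑ j ∈ Ici i, nextDiff v j = v i := by
  set e : ℕ → M := fun k => if h : k < n then v ⟨k, h⟩ else 0
  have he : ∀ j : Fin n, nextDiff v j = e j - e (j + 1) := fun j => by simp [nextDiff, e]
  calc ∑ j ∈ Ici i, nextDiff v j
      = ∑ k ∈ Ico (i : ℕ) n, (e k - e (k + 1)) := by
        rw [← Fin.map_valEmbedding_Ici, sum_map]; exact sum_congr rfl fun j _ => he j
    _ = e i - e n := by
        rw [← neg_sub, ← sum_Ico_sub e i.is_lt.le, ← sum_neg_distrib]; simp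
    _ = v i := by simp [e]

lemma Continuous.nextDiff {X : Type*} [TopologicalSpace X] [TopologicalSpace M]
    [IsTopologicalAddGroup M] {g : X → Fin n → M} (hg : Continuous g) :
    Continuous fun z => _root_.nextDiff (g z) := by
  refine continuous_pi fun i => ?_
  by_cases h : (i : ℕ) + 1 < n <;> simp only [_root_.nextDiff, h, dite_true, dite_false] <;>
    fun_prop

end NextDiff

lemma IntraOrderPreserving.apply_le_apply_iff {f : (Fin n → ℝ) → (Fin n → ℝ)}
    (hop : IntraOrderPreserving n f) (x : Fin n → ℝ) (i j : Fin n) :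
    x i ≤ x j ↔ f x i ≤ f x j := by
  simpa only [gt_iff_lt, not_lt] using not_congr (hop x i j)

lemma IntraOrderPreserving.apply_eq_apply_iff {f : (Fin n → ℝ) → (Fin n → ℝ)}
    (hop : IntraOrderPreserving n f) (x : Fin n → ℝ) (i j : Fin n) :
    x i = x j ↔ f x i = f x j := by
  rw [le_antisymm_iff, le_antisymm_iff, hop.apply_le_apply_iff x i j, hop.apply_le_apply_iff x j i]

section Sorting

variable {σ : Equiv.Perm (Fin n)} {x : Fin n → ℝ}

lemma sortsPerm_sort (x : Fin n → ℝ) : SortsPerm n (Tuple.sort fun j => -x j) x :=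
  fun _ _ hab => neg_le_neg_iff.mp (Tuple.monotone_sort (fun j => -x j) hab)

lemma SortsPerm.comp_eq_sortedDesc (hσ : SortsPerm n σ x) : x ∘ σ = sortedDesc n x := by
  have h := Tuple.comp_sort_eq_comp_iff_monotone.mpr
    (show Monotone ((fun j => -x j) ∘ σ) from fun _ _ hab => neg_le_neg (hσ hab))
  funext i
  simpa [sortedDesc] using congrFun h i

lemma SortsPerm.comp_perm (hσ : SortsPerm n σ x) (π : Equiv.Perm (Fin n)) :
    SortsPerm n (π⁻¹ * σ) (x ∘ π) := by
  simpa [SortsPerm, Function.comp_def] using hσ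

lemma sortedDesc_comp_perm (x : Fin n → ℝ) (π : Equiv.Perm (Fin n)) :
    sortedDesc n (x ∘ π) = sortedDesc n x := by
  have hσ := sortsPerm_sort x
  rw [← (hσ.comp_perm π).comp_eq_sortedDesc, ← hσ.comp_eq_sortedDesc]
  simp [Function.comp_def]

lemma OrderInvariant.apply_sortedDesc {f : (Fin n → ℝ) → (Fin n → ℝ)} (hf : OrderInvariant n f)
    (hσ : SortsPerm n σ x) : f (sortedDesc n x) = f x ∘ σ := by
  rw [← hσ.comp_eq_sortedDesc, hf]

lemma orderInvariant_of_comp_sortsPerm {f F : (Fin n → ℝ) → (Fin n → ℝ)}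
    (hF : ∀ x σ, SortsPerm n σ x → f x ∘ σ = F (sortedDesc n x)) : OrderInvariant n f := by
  intro π x
  set τ := Tuple.sort fun j => -x j
  have hτ : SortsPerm n τ x := sortsPerm_sort x
  have h : f (x ∘ π) ∘ π.symm ∘ τ = f x ∘ τ := by
    rw [hF x τ hτ, ← sortedDesc_comp_perm x π, ← hF _ _ (hτ.comp_perm π)]
    rfl
  have h' : f (x ∘ π) ∘ π.symm = f x := τ.surjective.injective_comp_right h
  rw [← h']
  ext k
  simp

end Sorting

end

theorem stmt_1_general (n : ℕ) (f : (Fin n → ℝ) → (Fin n → ℝ))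
    (hf : Continuous f) (hop : IntraOrderPreserving n f) :
    OrderInvariant n f ↔
      ∃ w : (Fin n → ℝ) → (Fin n → ℝ), Continuous w ∧
        (∀ (x : Fin n → ℝ) (σ : Equiv.Perm (Fin n)), SortsPerm n σ x →
          ∀ i : Fin n, f x (σ i) = ∑ j ∈ Finset.Ici i, w (sortedDesc n x) j) ∧
        (∀ (x : Fin n → ℝ) (i : ℕ) (hi : i + 1 < n),
          (sortedDesc n x ⟨i, Nat.lt_of_succ_lt hi⟩ = sortedDesc n x ⟨i + 1, hi⟩ →
            w (sortedDesc n x) ⟨i, Nat.lt_of_succ_lt hi⟩ = 0) ∧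
          (sortedDesc n x ⟨i, Nat.lt_of_succ_lt hi⟩ > sortedDesc n x ⟨i + 1, hi⟩ →
            0 < w (sortedDesc n x) ⟨i, Nat.lt_of_succ_lt hi⟩)) := by
  constructor
  · intro hinv
    refine ⟨fun y => nextDiff (f y), hf.nextDiff, fun x σ hσ i => ?_, fun x i hi => ?_⟩
    · rw [sum_Ici_nextDiff, hinv.apply_sortedDesc hσ, Function.comp_apply]
    · dsimp only
      rw [nextDiff_of_succ_lt _ hi, sub_eq_zero, sub_pos]
      exact ⟨(hop.apply_eq_apply_iff _ _ _).mp, (hop _ _ _).mp⟩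
  · rintro ⟨w, -, hw, -⟩
    exact orderInvariant_of_comp_sortsPerm (F := fun y i => ∑ j ∈ Ici i, w y j)
      fun x σ hσ => funext (hw x σ hσ)

theorem stmt_1 (n : ℕ) (hn : 1 ≤ n) (f : (Fin n → ℝ) → (Fin n → ℝ))
    (hf : Continuous f) (hop : IntraOrderPreserving n f) :
    OrderInvariant n f ↔
      ∃ w : (Fin n → ℝ) → (Fin n → ℝ), Continuous w ∧
        (∀ (x : Fin n → ℝ) (σ : Equiv.Perm (Fin n)), SortsPerm n σ x →
          ∀ i : Fin n, f x (σ i) = ∑ j ∈ Finset.Ici i, w (sortedDesc n x) j) ∧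
        (∀ (x : Fin n → ℝ) (i : ℕ) (hi : i + 1 < n),
          (sortedDesc n x ⟨i, Nat.lt_of_succ_lt hi⟩ = sortedDesc n x ⟨i + 1, hi⟩ →
            w (sortedDesc n x) ⟨i, Nat.lt_of_succ_lt hi⟩ = 0) ∧
          (sortedDesc n x ⟨i, Nat.lt_of_succ_lt hi⟩ > sortedDesc n x ⟨i + 1, hi⟩ →
            0 < w (sortedDesc n x) ⟨i, Nat.lt_of_succ_lt hi⟩)) :=
  stmt_1_general n f hf hop
end

section
/- Let n ≥ 1. A function f : ℝ^n → ℝ^n is order-invariant if and only if there exists a function g : ℝ^n → ℝ^n, which is equality-preserving on the set of nonincreasing vectors {y ∈ ℝ^n : y_1 ≥ y_2 ≥ … ≥ y_n}, such that for every x ∈ ℝ^n and every permutation σ sorting x, f(x)_{σ(i)} = g(y)_i for all i, where y is the sorted version of x. -/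
/-- Two antitone rearrangements of a tuple coincide. -/
lemma unique_antitone {n : ℕ} (x : Fin n → ℝ) (σ τ : Equiv.Perm (Fin n))
    (hσ : Antitone (x ∘ σ)) (hτ : Antitone (x ∘ τ)) : x ∘ σ = x ∘ τ := by
  have h1 : Monotone ((fun j => -x j) ∘ σ) := fun a b hab => neg_le_neg (hσ hab)
  have h2 : Monotone ((fun j => -x j) ∘ τ) := fun a b hab => neg_le_neg (hτ hab)
  have h := Tuple.unique_monotone h1 h2
  funext i
  have := congrFun h i
  simpa using neg_injective this

lemma sortedDesc_eq {n : ℕ} (x : Fin n → ℝ) :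
    sortedDesc n x = x ∘ Tuple.sort (fun j => -x j) := rfl

lemma antitone_sortedDesc {n : ℕ} (x : Fin n → ℝ) : Antitone (sortedDesc n x) := by
  have h := Tuple.monotone_sort (fun j => -x j)
  intro a b hab
  have := h hab
  simpa [sortedDesc] using this

theorem stmt_6 (n : ℕ) (hn : 1 ≤ n) (f : (Fin n → ℝ) → (Fin n → ℝ)) :
    OrderInvariant n f ↔
      ∃ g : (Fin n → ℝ) → (Fin n → ℝ),
        (∀ y : Fin n → ℝ, Antitone y → ∀ i j : Fin n, y i = y j → g y i = g y j) ∧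
        (∀ (x : Fin n → ℝ) (σ : Equiv.Perm (Fin n)), SortsPerm n σ x →
          ∀ i : Fin n, f x (σ i) = g (sortedDesc n x) i) := by
  constructor
  · intro hf
    refine ⟨f, ?_, ?_⟩
    · intro y _ i j hij
      have hy : y ∘ Equiv.swap i j = y := by
        funext k
        rcases eq_or_ne k i with rfl | hki
        · simp [Equiv.swap_apply_left, hij]
        rcases eq_or_ne k j with rfl | hkj
        · simp [Equiv.swap_apply_right, hij]
        · simp [Equiv.swap_apply_of_ne_of_ne hki hkj]
      have := hf (Equiv.swap i j) y
      rw [hy] at this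
      have := congrFun this i
      simpa [Equiv.swap_apply_left] using this
    · intro x σ hσ i
      set τ : Equiv.Perm (Fin n) := Tuple.sort (fun j => -x j) with hτdef
      have hτ : Antitone (x ∘ τ) := antitone_sortedDesc x
      have hsorted : x ∘ σ = x ∘ τ := unique_antitone x σ τ hσ hτ
      -- ρ := τ⁻¹ ∘ σ; then x ∘ τ ∘ ρ = x ∘ σ = x ∘ τ
      set ρ : Equiv.Perm (Fin n) := σ.trans τ.symm with hρdef
      have hyρ : (x ∘ τ) ∘ ρ = x ∘ τ := by
        funext k
        have := congrFun hsorted k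
        simpa [hρdef, Function.comp] using this
      have h1 := hf ρ (x ∘ τ)
      rw [hyρ] at h1
      have h2 : f x ∘ τ = f (x ∘ τ) := (hf τ x).symm
      calc f x (σ i) = (f x ∘ τ) (ρ i) := by
              simp [hρdef, Function.comp]
        _ = f (x ∘ τ) (ρ i) := by rw [h2]
        _ = f (x ∘ τ) i := (congrFun h1 i).symm
        _ = f (sortedDesc n x) i := rfl
  · rintro ⟨g, -, hg⟩
    intro σ x
    set τ : Equiv.Perm (Fin n) := Tuple.sort (fun j => -x j) with hτdef
    have hτ : Antitone (x ∘ τ) := antitone_sortedDesc x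
    -- sorting perm for x ∘ σ
    set ρ : Equiv.Perm (Fin n) := τ.trans σ.symm with hρdef
    have hρ : SortsPerm n ρ (x ∘ σ) := by
      have : (x ∘ σ) ∘ ρ = x ∘ τ := by
        funext k; simp [hρdef, Function.comp]
      simpa [SortsPerm, this] using hτ
    have hsd : sortedDesc n (x ∘ σ) = sortedDesc n x := by
      have h1 : Antitone ((x ∘ σ) ∘ Tuple.sort (fun j => -(x ∘ σ) j)) :=
        antitone_sortedDesc (x ∘ σ)
      have h2 : Antitone (x ∘ (Equiv.trans (Tuple.sort (fun j => -(x ∘ σ) j)) σ)) := by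
        have : x ∘ (Equiv.trans (Tuple.sort (fun j => -(x ∘ σ) j)) σ)
            = (x ∘ σ) ∘ Tuple.sort (fun j => -(x ∘ σ) j) := by
          funext k; simp [Function.comp]
        rw [this]; exact h1
      have := unique_antitone x _ τ h2 hτ
      funext k
      have := congrFun this k
      simpa [sortedDesc, Function.comp] using this
    funext k
    have hi := hg (x ∘ σ) ρ hρ (τ.symm (σ k))
    have hx := hg x τ (by simpa [SortsPerm] using hτ) (τ.symm (σ k))
    rw [hsd] at hi
    have : f (x ∘ σ) (ρ (τ.symm (σ k))) = f x (τ (τ.symm (σ k))) := by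
      rw [hi, ← hx]
    simpa [hρdef, Function.comp] using this
end

section
/- Let n ≥ 1, let s : ℝ → ℝ be continuous with s(0) = 0 and s(a) > 0 for all a ≠ 0, and let m : ℝ^n → ℝ^n be continuous with m_i(x) > 0 for all x ∈ ℝ^n and all i < n. Define w : ℝ^n → ℝ^n by w_i(x) = s(y_i − y_{i+1}) · m_i(x) for i < n and w_n(x) = m_n(x), where y is the sorted version of x, and define f : ℝ^n → ℝ^n by f(x)_{σ(i)} = Σ_{j=i}^{n} w_j(x) for any permutation σ sorting x (this is well defined). Then f is continuous and intra order-preserving. -/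
/-- `w_i(x) = s(y_i - y_{i+1}) * m_i(x)` for `i < n` and `w_n(x) = m_n(x)`,
where `y` is the sorted version of `x`. -/
noncomputable def wFun (n : ℕ) (s : ℝ → ℝ) (m : (Fin n → ℝ) → (Fin n → ℝ)) :
    (Fin n → ℝ) → Fin n → ℝ :=
  fun x i =>
    if h : (i : ℕ) + 1 < n then
      s (sortedDesc n x i - sortedDesc n x ⟨(i : ℕ) + 1, h⟩) * m x i
    else m x i

/-!
Write `y` for the sorted version of `x` and `S i = ∑ j ≥ i, w j`, so that `f x (σ i) = S i`.
Since `s ≥ 0` vanishes only at `0` and `m_j > 0`, each `w_j` with `j + 1 < n` is nonnegative and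
vanishes exactly when `y_j = y_{j+1}`; hence `S` is antitone and `S k < S i ↔ y k < y i`, which is
order preservation.

For continuity, the `k`-th largest coordinate `y_k` is the maximum over `(k + 1)`-sets of
coordinates of their minimum, hence continuous. Replacing every `y_j` by `min y_j (x a)` in the
weights turns the `w_j` with `j < σ⁻¹ a` into `s 0 * m_j = 0` and leaves the others
unchanged, so `f x a` is the sum of all these clipped weights, an expression free of permutations.
-/

open Finset

section AntitoneSums

variable {α : Type*} {n : ℕ} {y : Fin n → α} {i k : Fin n}

theorem Antitone.eq_iff_forall_eq_succ [PartialOrder α] (hy : Antitone y) (hik : i ≤ k) :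
    y i = y k ↔ ∀ j ∈ Ico i k, ∀ h : (j : ℕ) + 1 < n, y j = y ⟨j + 1, h⟩ := by
  constructor
  · intro hyik j hj h
    rw [mem_Ico] at hj
    refine le_antisymm ?_ (hy (Fin.le_def.2 (Nat.le_succ _)))
    calc y j ≤ y i := hy hj.1
      _ = y k := hyik
      _ ≤ y ⟨j + 1, h⟩ := hy (Fin.le_def.2 hj.2)
  · intro hchain
    suffices ∀ t, (i : ℕ) ≤ t → ∀ ht : t ≤ k, y i = y ⟨t, ht.trans_lt k.isLt⟩ from
      this k hik le_rfl
    intro t hit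
    induction t, hit using Nat.le_induction with
    | base => intro _; rfl
    | succ t hit ih =>
      intro ht
      rw [ih (by omega)]
      exact hchain ⟨t, by omega⟩ (mem_Ico.2 ⟨hit, Fin.lt_def.2 ht⟩) _

theorem sum_Ici_lt_sum_Ici_iff [LinearOrder α] {w : Fin n → ℝ} (hy : Antitone y)
    (hw_nonneg : ∀ j : Fin n, (j : ℕ) + 1 < n → 0 ≤ w j)
    (hw_eq_zero : ∀ (j : Fin n) (h : (j : ℕ) + 1 < n), w j = 0 ↔ y j = y ⟨j + 1, h⟩) :
    ∑ j ∈ Ici k, w j < ∑ j ∈ Ici i, w j ↔ y k < y i := by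
  rcases le_total i k with hik | hki
  -- the sums differ by `∑ j ∈ Ico i k, w j`, which vanishes iff `y` is constant on `[i, k]`
  · have hIco : Ici i \ Ici k = Ico i k := by ext j; simp
    have hlt : ∀ j ∈ Ico i k, (j : ℕ) + 1 < n := fun j hj => by
      have := Fin.lt_def.1 (mem_Ico.1 hj).2; omega
    have hnn : ∀ j ∈ Ico i k, 0 ≤ w j := fun j hj => hw_nonneg j (hlt j hj)
    rw [← sum_sdiff (Ici_subset_Ici.2 hik), hIco, lt_add_iff_pos_left,
      (sum_nonneg hnn).lt_iff_ne', Ne, sum_eq_zero_iff_of_nonneg hnn, (hy hik).lt_iff_ne, Ne,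
      eq_comm, hy.eq_iff_forall_eq_succ hik]
    refine not_congr (forall₂_congr fun j hj => ?_)
    rw [hw_eq_zero j (hlt j hj)]
    exact ⟨fun e _ => e, fun e => e _⟩
  · have hnn : ∀ j ∈ Ici k, j ∉ Ici i → 0 ≤ w j := fun j _ hj => hw_nonneg j <| by
      have := Fin.lt_def.1 (not_le.1 (mem_Ici.not.1 hj)); have := i.isLt; omega
    exact iff_of_false (not_lt.2 (sum_le_sum_of_subset_of_nonneg (Ici_subset_Ici.2 hki) hnn))
      (not_lt.2 (hy hki))

end AntitoneSums

section Sorting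

variable {n : ℕ}

noncomputable def descSortPerm (x : Fin n → ℝ) : Equiv.Perm (Fin n) :=
  Tuple.sort fun j => -x j

theorem sortedDesc_apply (x : Fin n → ℝ) (i : Fin n) :
    sortedDesc n x i = x (descSortPerm x i) :=
  rfl

theorem sortedDesc_antitone (x : Fin n → ℝ) : Antitone (sortedDesc n x) := fun _ _ hij =>
  neg_le_neg_iff.1 (Tuple.monotone_sort (fun j => -x j) hij)

theorem sortsPerm_descSortPerm (x : Fin n → ℝ) : SortsPerm n (descSortPerm x) x :=
  sortedDesc_antitone x

theorem sortedDesc_descSortPerm_symm (x : Fin n → ℝ) (a : Fin n) :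
    sortedDesc n x ((descSortPerm x).symm a) = x a := by
  rw [sortedDesc_apply, Equiv.apply_symm_apply]

noncomputable def kthLargest (k : Fin n) (x : Fin n → ℝ) : ℝ :=
  (univ.powersetCard (k + 1)).sup' (powersetCard_nonempty.2 (by simp))
    fun S => if h : S.Nonempty then S.inf' h x else 0

theorem continuous_kthLargest (k : Fin n) : Continuous (kthLargest k) := by
  refine Continuous.finset_sup'_apply _ fun S _ => ?_
  by_cases h : S.Nonempty
  · simp only [dif_pos h]
    exact Continuous.finset_inf'_apply h fun i _ => continuous_apply i
  · simp only [dif_neg h]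
    exact continuous_const

theorem kthLargest_eq_of_sortsPerm {σ : Equiv.Perm (Fin n)} {x : Fin n → ℝ}
    (hσ : SortsPerm n σ x) (k : Fin n) : kthLargest k x = x (σ k) := by
  apply le_antisymm
  · refine sup'_le _ _ fun S hS => ?_
    rw [mem_powersetCard] at hS
    have hne : S.Nonempty := card_pos.1 (by omega)
    rw [dif_pos hne]
    -- pigeonhole: `k + 1` elements do not fit into the `k` positions before `k`
    obtain ⟨j, hjS, hkj⟩ : ∃ j ∈ S, k ≤ σ.symm j := by
      by_contra! hcon
      have := card_le_card (s := S.image σ.symm) (t := Iio k) fun j hj => by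
        obtain ⟨a, ha, rfl⟩ := mem_image.1 hj
        exact mem_Iio.2 (hcon a ha)
      rw [card_image_of_injective _ σ.symm.injective, hS.2, Fin.card_Iio] at this
      omega
    calc S.inf' hne x ≤ x j := inf'_le _ hjS
      _ = x (σ (σ.symm j)) := by rw [Equiv.apply_symm_apply]
      _ ≤ x (σ k) := hσ hkj
  · have hmem : (Iic k).image σ ∈ univ.powersetCard (k + 1) := by
      rw [mem_powersetCard, card_image_of_injective _ σ.injective, Fin.card_Iic]
      exact ⟨subset_univ _, rfl⟩
    have hne : ((Iic k).image σ).Nonempty := image_nonempty.2 nonempty_Iic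
    refine le_trans ?_ (le_sup' _ hmem)
    rw [dif_pos hne]
    refine le_inf' _ _ fun b hb => ?_
    obtain ⟨j, hj, rfl⟩ := mem_image.1 hb
    exact hσ (mem_Iic.1 hj)

theorem continuous_sortedDesc (k : Fin n) : Continuous fun x : Fin n → ℝ => sortedDesc n x k := by
  have : kthLargest k = fun x => sortedDesc n x k :=
    funext fun x => kthLargest_eq_of_sortsPerm (sortsPerm_descSortPerm x) k
  exact this ▸ continuous_kthLargest k

end Sorting

section Weights

variable {n : ℕ} {s : ℝ → ℝ} {m : (Fin n → ℝ) → Fin n → ℝ}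

theorem wFun_nonneg (hs0 : s 0 = 0) (hspos : ∀ a : ℝ, a ≠ 0 → 0 < s a)
    (hmpos : ∀ (x : Fin n → ℝ) (i : Fin n), (i : ℕ) + 1 < n → 0 < m x i)
    (x : Fin n → ℝ) (j : Fin n) (h : (j : ℕ) + 1 < n) : 0 ≤ wFun n s m x j := by
  have hs_nonneg (a : ℝ) : 0 ≤ s a := by
    rcases eq_or_ne a 0 with rfl | ha
    exacts [hs0.ge, (hspos a ha).le]
  rw [wFun, dif_pos h]
  exact mul_nonneg (hs_nonneg _) (hmpos x j h).le

theorem wFun_eq_zero_iff (hs0 : s 0 = 0) (hspos : ∀ a : ℝ, a ≠ 0 → 0 < s a)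
    (hmpos : ∀ (x : Fin n → ℝ) (i : Fin n), (i : ℕ) + 1 < n → 0 < m x i)
    (x : Fin n → ℝ) (j : Fin n) (h : (j : ℕ) + 1 < n) :
    wFun n s m x j = 0 ↔ sortedDesc n x j = sortedDesc n x ⟨j + 1, h⟩ := by
  rw [wFun, dif_pos h, mul_eq_zero, or_iff_left (hmpos x j h).ne']
  refine ⟨fun hsy => by_contra fun hy => (hspos _ (sub_ne_zero.2 hy)).ne' hsy, fun hy => ?_⟩
  rw [hy, sub_self, hs0]

noncomputable def clippedWFun (s : ℝ → ℝ) (m : (Fin n → ℝ) → Fin n → ℝ) (x : Fin n → ℝ) (c : ℝ)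
    (j : Fin n) : ℝ :=
  if h : (j : ℕ) + 1 < n then
    s (min (sortedDesc n x j) c - min (sortedDesc n x ⟨j + 1, h⟩) c) * m x j
  else m x j

theorem clippedWFun_sortedDesc (hs0 : s 0 = 0) (x : Fin n → ℝ) (i j : Fin n) :
    clippedWFun s m x (sortedDesc n x i) j = if i ≤ j then wFun n s m x j else 0 := by
  have hy := sortedDesc_antitone x
  have hsucc (h : (j : ℕ) + 1 < n) : j ≤ ⟨j + 1, h⟩ := Fin.le_def.2 (j : ℕ).le_succ
  unfold clippedWFun wFun
  split_ifs with h hij hij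
  · rw [min_eq_left (hy hij), min_eq_left (hy (hij.trans (hsucc h)))]
  · have hji : ⟨j + 1, h⟩ ≤ i := Fin.le_def.2 (not_le.1 hij)
    rw [min_eq_right (hy (hsucc h |>.trans hji)), min_eq_right (hy hji), sub_self, hs0, zero_mul]
  · rfl
  · exact absurd (Fin.le_def.2 (by omega)) hij

theorem continuous_clippedWFun (hs : Continuous s) (hm : Continuous m) (a j : Fin n) :
    Continuous fun x => clippedWFun s m x (x a) j := by
  unfold clippedWFun
  split_ifs with h
  · exact (hs.comp (((continuous_sortedDesc j).min (continuous_apply a)).sub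
      ((continuous_sortedDesc _).min (continuous_apply a)))).mul ((continuous_apply j).comp hm)
  · exact (continuous_apply j).comp hm

end Weights

section Main

variable {n : ℕ} {s : ℝ → ℝ} {m : (Fin n → ℝ) → Fin n → ℝ} {f : (Fin n → ℝ) → Fin n → ℝ}

theorem apply_eq_sum_Ici_wFun
    (hfdef : ∀ (x : Fin n → ℝ) (σ : Equiv.Perm (Fin n)), SortsPerm n σ x →
      ∀ i : Fin n, f x (σ i) = ∑ j ∈ Finset.Ici i, wFun n s m x j) (x : Fin n → ℝ) (a : Fin n) :
    f x a = ∑ j ∈ Ici ((descSortPerm x).symm a), wFun n s m x j := by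
  rw [← hfdef x _ (sortsPerm_descSortPerm x), Equiv.apply_symm_apply]

theorem continuous_of_eq_sum_Ici_wFun (hs : Continuous s) (hs0 : s 0 = 0) (hm : Continuous m)
    (hfdef : ∀ (x : Fin n → ℝ) (σ : Equiv.Perm (Fin n)), SortsPerm n σ x →
      ∀ i : Fin n, f x (σ i) = ∑ j ∈ Finset.Ici i, wFun n s m x j) :
    Continuous f := by
  refine continuous_pi fun a => ?_
  have hf : (fun x => f x a) = fun x => ∑ j, clippedWFun s m x (x a) j := by
    funext x
    rw [apply_eq_sum_Ici_wFun hfdef, ← sortedDesc_descSortPerm_symm x a]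
    simp_rw [clippedWFun_sortedDesc hs0, ← sum_filter, filter_le_eq_Ici]
  rw [hf]
  exact continuous_finsetSum _ fun j _ => continuous_clippedWFun hs hm a j

theorem intraOrderPreserving_of_eq_sum_Ici_wFun (hs0 : s 0 = 0)
    (hspos : ∀ a : ℝ, a ≠ 0 → 0 < s a)
    (hmpos : ∀ (x : Fin n → ℝ) (i : Fin n), (i : ℕ) + 1 < n → 0 < m x i)
    (hfdef : ∀ (x : Fin n → ℝ) (σ : Equiv.Perm (Fin n)), SortsPerm n σ x →
      ∀ i : Fin n, f x (σ i) = ∑ j ∈ Finset.Ici i, wFun n s m x j) :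
    IntraOrderPreserving n f := by
  intro x a b
  rw [gt_iff_lt, gt_iff_lt, apply_eq_sum_Ici_wFun hfdef, apply_eq_sum_Ici_wFun hfdef,
    ← sortedDesc_descSortPerm_symm x a, ← sortedDesc_descSortPerm_symm x b]
  exact (sum_Ici_lt_sum_Ici_iff (sortedDesc_antitone x) (wFun_nonneg hs0 hspos hmpos x)
    (wFun_eq_zero_iff hs0 hspos hmpos x)).symm

end Main

theorem stmt_13_general (n : ℕ) (s : ℝ → ℝ)
    (hs : Continuous s) (hs0 : s 0 = 0) (hspos : ∀ a : ℝ, a ≠ 0 → 0 < s a)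
    (m : (Fin n → ℝ) → (Fin n → ℝ)) (hm : Continuous m)
    (hmpos : ∀ (x : Fin n → ℝ) (i : Fin n), (i : ℕ) + 1 < n → 0 < m x i)
    (f : (Fin n → ℝ) → (Fin n → ℝ))
    (hfdef : ∀ (x : Fin n → ℝ) (σ : Equiv.Perm (Fin n)), SortsPerm n σ x →
      ∀ i : Fin n, f x (σ i) = ∑ j ∈ Finset.Ici i, wFun n s m x j) :
    Continuous f ∧ IntraOrderPreserving n f :=
  ⟨continuous_of_eq_sum_Ici_wFun hs hs0 hm hfdef,
    intraOrderPreserving_of_eq_sum_Ici_wFun hs0 hspos hmpos hfdef⟩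

theorem stmt_13 (n : ℕ) (hn : 1 ≤ n) (s : ℝ → ℝ)
    (hs : Continuous s) (hs0 : s 0 = 0) (hspos : ∀ a : ℝ, a ≠ 0 → 0 < s a)
    (m : (Fin n → ℝ) → (Fin n → ℝ)) (hm : Continuous m)
    (hmpos : ∀ (x : Fin n → ℝ) (i : Fin n), (i : ℕ) + 1 < n → 0 < m x i)
    (f : (Fin n → ℝ) → (Fin n → ℝ))
    (hfdef : ∀ (x : Fin n → ℝ) (σ : Equiv.Perm (Fin n)), SortsPerm n σ x →
      ∀ i : Fin n, f x (σ i) = ∑ j ∈ Finset.Ici i, wFun n s m x j) :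
    Continuous f ∧ IntraOrderPreserving n f :=
  stmt_13_general n s hs hs0 hspos m hm hmpos f hfdef
end
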